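/- Let N ≥ 5 be an integer, let σ > 0, and let λ₁, …, λ_{N−1} ≥ 0 be real numbers. Define Σ := { (x′, x_N) ∈ ℝ^{N−1} × ℝ : |x_i| < σ for all 1 ≤ i ≤ N−1, and 0 < x_N < Σ_{i=1}^{N−1} λ_i x_i² }. Then there exists a constant C > 0 such that for every ε ∈ (0,1], ∫_Σ U_{ε,0}(x)^{2(N−1)/(N−2)} dx ≤ C · ε². -/

import Mathlib

/-!
Split `ℝ^N` into the ball of radius `ε` and the dyadic shells `2^k ε ≤ |x| ≤ 2^(k+1) ε`. On the cap
`0 < x_N ≤ Λ |x|²` with `Λ = ∑ |λ_i|`, so its part inside a ball of radius `R` lies in a box of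
volume `2^(N-1) Λ R^(N+1)`. The integrand equals `(N(N-2)ε / (N(N-2)ε² + |x|²))^(N-1)`, which is
at most `(N(N-2)/ε)^(N-1)` and decays like `|x|^(-2(N-1))`. Since `2(N-1) > N+1`, the shells
contribute a geometric series, and the total is `O(ε^(-(N-1)) ε^(N+1)) = O(ε²)`.
-/

open Real MeasureTheory

/-- The Talenti instanton `U(x) = (N(N−2)/(N(N−2)+|x|²))^((N−2)/2)` on `ℝ^N`. -/
noncomputable def talenti (N : ℕ) (x : EuclideanSpace ℝ (Fin N)) : ℝ :=
  ((N : ℝ) * ((N : ℝ) - 2) / ((N : ℝ) * ((N : ℝ) - 2) + ‖x‖ ^ 2)) ^ (((N : ℝ) - 2) / 2)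

/-- The rescaled instanton centered at the origin, `U_{ε,0}(x) = ε^(−(N−2)/2)·U(x/ε)`. -/
noncomputable def talentiRescaled₀ (N : ℕ) (ε : ℝ) (x : EuclideanSpace ℝ (Fin N)) : ℝ :=
  ε ^ (-(((N : ℝ) - 2) / 2)) * talenti N (ε⁻¹ • x)

open Metric

lemma setLIntegral_enorm_le_of_norm_le {α F : Type*} [MeasurableSpace α] [NormedAddCommGroup F]
    {μ : Measure α} {s : Set α} {g : α → F} {c : ℝ} (h : ∀ x ∈ s, ‖g x‖ ≤ c) :
    ∫⁻ x in s, ‖g x‖ₑ ∂μ ≤ ENNReal.ofReal c * μ s := by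
  rw [← setLIntegral_const]
  exact setLIntegral_mono measurable_const fun x hx =>
    ofReal_norm (g x) ▸ ENNReal.ofReal_le_ofReal (h x hx)

section DyadicDecomposition

variable {E F : Type*} [NormedAddCommGroup E] [NormedAddCommGroup F] {ρ : ℝ}

def dyadicShell (ρ : ℝ) (k : ℕ) : Set E := closedBall 0 (2 ^ (k + 1) * ρ) \ ball 0 (2 ^ k * ρ)

lemma subset_closedBall_union_iUnion_dyadicShell (hρ : 0 < ρ) (S : Set E) :
    S ⊆ (S ∩ closedBall 0 ρ) ∪ ⋃ k : ℕ, S ∩ dyadicShell ρ k := by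
  intro x hx
  rcases le_or_gt ‖x‖ ρ with hle | hlt
  · exact Or.inl ⟨hx, mem_closedBall_zero_iff.2 hle⟩
  · obtain ⟨k, hk, hk'⟩ := exists_nat_pow_near ((one_le_div hρ).2 hlt.le) one_lt_two
    rw [le_div_iff₀ hρ] at hk
    rw [div_lt_iff₀ hρ] at hk'
    refine Or.inr (Set.mem_iUnion.2 ⟨k, hx, ?_, ?_⟩)
    · exact mem_closedBall_zero_iff.2 hk'.le
    · exact fun h => (mem_ball_zero_iff.1 h).not_ge hk

variable [MeasurableSpace E] {μ : Measure E} {S : Set E} {g : E → F} {p q : ℕ} {A M : ℝ}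

lemma setLIntegral_dyadicShell_le (hqp : q < p) (hρ : 0 < ρ) (hA : 0 ≤ A) (hM : 0 ≤ M)
    (hS : ∀ R, 0 < R → μ (S ∩ closedBall 0 R) ≤ ENNReal.ofReal (A * R ^ q))
    (hg_decay : ∀ x, ‖g x‖ * ‖x‖ ^ p ≤ M * ρ ^ p) (k : ℕ) :
    ∫⁻ x in S ∩ dyadicShell ρ k, ‖g x‖ₑ ∂μ ≤ ENNReal.ofReal (2 ^ q * M * A * ρ ^ q) * 2⁻¹ ^ k := by
  have h2k : (0 : ℝ) < 2 ^ k := by positivity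
  have hbound : ∀ x ∈ S ∩ dyadicShell ρ k, ‖g x‖ ≤ M * ((2 ^ k)⁻¹) ^ p := by
    rintro x ⟨-, -, hx⟩
    have hx : 2 ^ k * ρ ≤ ‖x‖ := not_lt.1 (mt mem_ball_zero_iff.2 hx)
    have hxp : 0 < ‖x‖ ^ p := pow_pos ((by positivity : (0 : ℝ) < 2 ^ k * ρ).trans_le hx) p
    calc ‖g x‖ ≤ M * ρ ^ p / ‖x‖ ^ p := (le_div_iff₀ hxp).2 (hg_decay x)
      _ ≤ M * ρ ^ p / (2 ^ k * ρ) ^ p := by gcongr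
      _ = M * ((2 ^ k)⁻¹) ^ p := by
        rw [mul_pow, inv_pow, mul_div_mul_right _ _ (pow_ne_zero p hρ.ne'), div_eq_mul_inv]
  have hratio : ((2 : ℝ) ^ k)⁻¹ ^ p * (2 ^ k) ^ q ≤ 2⁻¹ ^ k := by
    obtain ⟨r, rfl⟩ := Nat.exists_eq_add_of_lt hqp
    calc ((2 : ℝ) ^ k)⁻¹ ^ (q + r + 1) * (2 ^ k) ^ q = ((2 ^ k)⁻¹) ^ (r + 1) := by
          rw [add_assoc, pow_add, mul_right_comm, ← mul_pow, inv_mul_cancel₀ h2k.ne', one_pow,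
            one_mul]
      _ ≤ (2 ^ k)⁻¹ :=
          pow_le_of_le_one (by positivity) (inv_le_one_of_one_le₀ (one_le_pow₀ one_le_two))
            (by omega)
      _ = 2⁻¹ ^ k := by rw [inv_pow]
  calc ∫⁻ x in S ∩ dyadicShell ρ k, ‖g x‖ₑ ∂μ
      ≤ ENNReal.ofReal (M * ((2 ^ k)⁻¹) ^ p) * μ (S ∩ dyadicShell ρ k) :=
        setLIntegral_enorm_le_of_norm_le hbound
    _ ≤ ENNReal.ofReal (M * ((2 ^ k)⁻¹) ^ p) * ENNReal.ofReal (A * (2 ^ (k + 1) * ρ) ^ q) := by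
        gcongr
        exact (measure_mono (Set.inter_subset_inter_right _ Set.sdiff_subset)).trans
          (hS _ (by positivity))
    _ ≤ ENNReal.ofReal (2 ^ q * M * A * ρ ^ q) * 2⁻¹ ^ k := by
        rw [← ENNReal.ofReal_mul (by positivity), ← ENNReal.ofReal_ofNat 2,
          ← ENNReal.ofReal_inv_of_pos two_pos, ← ENNReal.ofReal_pow (by norm_num),
          ← ENNReal.ofReal_mul (by positivity)]
        refine ENNReal.ofReal_le_ofReal ?_
        calc M * ((2 ^ k)⁻¹) ^ p * (A * (2 ^ (k + 1) * ρ) ^ q)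
            = 2 ^ q * M * A * ρ ^ q * (((2 ^ k)⁻¹) ^ p * (2 ^ k) ^ q) := by ring
          _ ≤ 2 ^ q * M * A * ρ ^ q * 2⁻¹ ^ k := by gcongr

lemma norm_setIntegral_le_of_growth_of_decay [NormedSpace ℝ F] (hqp : q < p) (hρ : 0 < ρ)
    (hA : 0 ≤ A) (hS : ∀ R, 0 < R → μ (S ∩ closedBall 0 R) ≤ ENNReal.ofReal (A * R ^ q))
    (hg_le : ∀ x, ‖g x‖ ≤ M) (hg_decay : ∀ x, ‖g x‖ * ‖x‖ ^ p ≤ M * ρ ^ p) :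
    ‖∫ x in S, g x ∂μ‖ ≤ (2 ^ (q + 1) + 1) * M * A * ρ ^ q := by
  have hM : 0 ≤ M := (norm_nonneg _).trans (hg_le 0)
  have hball : ∫⁻ x in S ∩ closedBall 0 ρ, ‖g x‖ₑ ∂μ ≤ ENNReal.ofReal (M * A * ρ ^ q) :=
    calc ∫⁻ x in S ∩ closedBall 0 ρ, ‖g x‖ₑ ∂μ ≤ ENNReal.ofReal M * μ (S ∩ closedBall 0 ρ) :=
          setLIntegral_enorm_le_of_norm_le fun x _ => hg_le x
      _ ≤ ENNReal.ofReal M * ENNReal.ofReal (A * ρ ^ q) := by gcongr; exact hS ρ hρ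
      _ = ENNReal.ofReal (M * A * ρ ^ q) := by rw [← ENNReal.ofReal_mul hM, mul_assoc]
  have hshells : ∑' k : ℕ, ∫⁻ x in S ∩ dyadicShell ρ k, ‖g x‖ₑ ∂μ ≤
      ENNReal.ofReal (2 ^ (q + 1) * M * A * ρ ^ q) :=
    calc ∑' k : ℕ, ∫⁻ x in S ∩ dyadicShell ρ k, ‖g x‖ₑ ∂μ
        ≤ ∑' k : ℕ, ENNReal.ofReal (2 ^ q * M * A * ρ ^ q) * 2⁻¹ ^ k :=
          ENNReal.tsum_le_tsum (setLIntegral_dyadicShell_le hqp hρ hA hM hS hg_decay)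
      _ = ENNReal.ofReal (2 ^ q * M * A * ρ ^ q) * ENNReal.ofReal 2 := by
          rw [ENNReal.tsum_mul_left, ENNReal.tsum_geometric, ENNReal.one_sub_inv_two, inv_inv,
            ENNReal.ofReal_ofNat]
      _ = ENNReal.ofReal (2 ^ (q + 1) * M * A * ρ ^ q) := by
          rw [← ENNReal.ofReal_mul (by positivity)]
          ring_nf
  have hlint : ∫⁻ x in S, ‖g x‖ₑ ∂μ ≤ ENNReal.ofReal ((2 ^ (q + 1) + 1) * M * A * ρ ^ q) :=
    calc ∫⁻ x in S, ‖g x‖ₑ ∂μ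
        ≤ ∫⁻ x in (S ∩ closedBall 0 ρ) ∪ ⋃ k : ℕ, S ∩ dyadicShell ρ k, ‖g x‖ₑ ∂μ :=
          lintegral_mono_set (subset_closedBall_union_iUnion_dyadicShell hρ S)
      _ ≤ ∫⁻ x in S ∩ closedBall 0 ρ, ‖g x‖ₑ ∂μ +
            ∑' k : ℕ, ∫⁻ x in S ∩ dyadicShell ρ k, ‖g x‖ₑ ∂μ :=
          (lintegral_union_le _ _ _).trans (add_le_add_right (lintegral_iUnion_le _ _) _)
      _ ≤ ENNReal.ofReal (M * A * ρ ^ q) + ENNReal.ofReal (2 ^ (q + 1) * M * A * ρ ^ q) :=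
          add_le_add hball hshells
      _ = ENNReal.ofReal ((2 ^ (q + 1) + 1) * M * A * ρ ^ q) := by
          rw [← ENNReal.ofReal_add (by positivity) (by positivity)]
          ring_nf
  rw [← ENNReal.ofReal_le_ofReal_iff (by positivity), ofReal_norm]
  exact (enorm_integral_le_lintegral_enorm _).trans hlint

end DyadicDecomposition

lemma volume_setOf_le_mul_norm_sq_inter_closedBall_le {n : ℕ} (l : Fin n) {Λ R : ℝ}
    (hΛ : 0 ≤ Λ) (hR : 0 ≤ R) :
    volume ({x : EuclideanSpace ℝ (Fin n) | 0 ≤ x l ∧ x l ≤ Λ * ‖x‖ ^ 2} ∩ closedBall 0 R) ≤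
      ENNReal.ofReal (2 ^ (n - 1) * Λ * R ^ (n + 1)) := by
  set I : Fin n → Set ℝ := Function.update (fun _ => Set.Icc (-R) R) l (Set.Icc 0 (Λ * R ^ 2))
  have hsub : {x : EuclideanSpace ℝ (Fin n) | 0 ≤ x l ∧ x l ≤ Λ * ‖x‖ ^ 2} ∩ closedBall 0 R ⊆
      (MeasurableEquiv.toLp 2 (Fin n → ℝ)).symm ⁻¹' Set.univ.pi I := by
    rintro x ⟨⟨hl0, hl⟩, hxR⟩ i -
    have hxR : ‖x‖ ≤ R := mem_closedBall_zero_iff.1 hxR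
    rcases eq_or_ne i l with rfl | hi
    · simp only [I, Function.update_self]
      exact ⟨hl0, hl.trans (by gcongr)⟩
    · simp only [I, Function.update_of_ne hi]
      exact abs_le.1 ((Real.norm_eq_abs _ ▸ PiLp.norm_apply_le x i).trans hxR)
  have hn : 1 ≤ n := Fin.pos l
  calc _ ≤ volume ((MeasurableEquiv.toLp 2 (Fin n → ℝ)).symm ⁻¹' Set.univ.pi I) := measure_mono hsub
    _ = ENNReal.ofReal (Λ * R ^ 2) * ENNReal.ofReal (2 * R) ^ (n - 1) := by
      rw [(EuclideanSpace.volume_preserving_symm_measurableEquiv_toLp _).measure_preimage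
        (MeasurableSet.univ_pi fun i => ?_).nullMeasurableSet, volume_pi_pi]
      · have hvol : ∀ i, volume (I i) =
            Function.update (fun _ => ENNReal.ofReal (2 * R)) l (ENNReal.ofReal (Λ * R ^ 2)) i := by
          intro i
          rcases eq_or_ne i l with rfl | hi
          · simp [I]
          · simp [I, Function.update_of_ne hi, two_mul]
        rw [Finset.prod_congr rfl fun i _ => hvol i, Finset.prod_update_of_mem (Finset.mem_univ l),
          Finset.prod_const, Finset.card_sdiff_of_subset (by simp), Finset.card_univ,
          Fintype.card_fin, Finset.card_singleton]
      · rcases eq_or_ne i l with rfl | hi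
        · simp only [I, Function.update_self, measurableSet_Icc]
        · simp only [I, Function.update_of_ne hi, measurableSet_Icc]
    _ = ENNReal.ofReal (2 ^ (n - 1) * Λ * R ^ (n + 1)) := by
      rw [← ENNReal.ofReal_pow (by positivity), ← ENNReal.ofReal_mul (by positivity)]
      congr 1
      obtain ⟨m, rfl⟩ := Nat.exists_eq_add_of_le' hn
      simp only [Nat.add_sub_cancel]
      ring

section Talenti

variable {N : ℕ} {ε : ℝ}

lemma talentiRescaled₀_eq (hN : 2 ≤ N) (hε : 0 < ε) (x : EuclideanSpace ℝ (Fin N)) :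
    talentiRescaled₀ N ε x =
      ((N : ℝ) * (N - 2) * ε / ((N : ℝ) * (N - 2) * ε ^ 2 + ‖x‖ ^ 2)) ^ (((N : ℝ) - 2) / 2) := by
  have ha : 0 ≤ (N : ℝ) * (N - 2) :=
    mul_nonneg (Nat.cast_nonneg N) (sub_nonneg.2 (by exact_mod_cast hN))
  have hfrac : (N : ℝ) * (N - 2) / ((N : ℝ) * (N - 2) + ‖ε⁻¹ • x‖ ^ 2) =
      (N : ℝ) * (N - 2) * ε ^ 2 / ((N : ℝ) * (N - 2) * ε ^ 2 + ‖x‖ ^ 2) := by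
    rw [norm_smul, norm_inv, Real.norm_eq_abs, abs_of_pos hε, ← mul_div_mul_right _ _
      (pow_ne_zero 2 hε.ne')]
    field_simp
  rw [talentiRescaled₀, talenti, hfrac, Real.rpow_neg hε.le, ← Real.inv_rpow hε.le,
    ← Real.mul_rpow (inv_nonneg.2 hε.le) (by positivity)]
  congr 1
  field_simp

lemma talentiRescaled₀_rpow_eq (hN : 3 ≤ N) (hε : 0 < ε) (x : EuclideanSpace ℝ (Fin N)) :
    talentiRescaled₀ N ε x ^ (2 * ((N : ℝ) - 1) / ((N : ℝ) - 2)) =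
      ((N : ℝ) * (N - 2) * ε / ((N : ℝ) * (N - 2) * ε ^ 2 + ‖x‖ ^ 2)) ^ (N - 1) := by
  have hN' : (3 : ℝ) ≤ N := by exact_mod_cast hN
  have ha : 0 ≤ (N : ℝ) * (N - 2) := by nlinarith
  have hexp : ((N : ℝ) - 2) / 2 * (2 * ((N : ℝ) - 1) / ((N : ℝ) - 2)) = ((N - 1 : ℕ) : ℝ) := by
    have h2 : (N : ℝ) - 2 ≠ 0 := by linarith
    rw [Nat.cast_sub (by omega), Nat.cast_one]
    field_simp
  rw [talentiRescaled₀_eq (by omega) hε, ← Real.rpow_mul (by positivity), hexp,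
    Real.rpow_natCast]

lemma norm_talentiRescaled₀_rpow_le (hN : 3 ≤ N) (hε : 0 < ε) (x : EuclideanSpace ℝ (Fin N)) :
    ‖talentiRescaled₀ N ε x ^ (2 * ((N : ℝ) - 1) / ((N : ℝ) - 2))‖ ≤
      ((N : ℝ) * (N - 2) / ε) ^ (N - 1) := by
  have hN' : (3 : ℝ) ≤ N := by exact_mod_cast hN
  have ha : 1 ≤ (N : ℝ) * (N - 2) := by nlinarith
  have hD : 0 < (N : ℝ) * (N - 2) * ε ^ 2 + ‖x‖ ^ 2 := by positivity
  rw [talentiRescaled₀_rpow_eq hN hε, norm_pow, Real.norm_of_nonneg (by positivity)]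
  refine pow_le_pow_left₀ (by positivity) ?_ _
  rw [div_le_div_iff₀ hD hε]
  nlinarith [sq_nonneg ‖x‖, sq_nonneg ε]

lemma norm_talentiRescaled₀_rpow_mul_norm_pow_le (hN : 3 ≤ N) (hε : 0 < ε)
    (x : EuclideanSpace ℝ (Fin N)) :
    ‖talentiRescaled₀ N ε x ^ (2 * ((N : ℝ) - 1) / ((N : ℝ) - 2))‖ * ‖x‖ ^ (2 * (N - 1)) ≤
      ((N : ℝ) * (N - 2) / ε) ^ (N - 1) * ε ^ (2 * (N - 1)) := by
  have hN' : (3 : ℝ) ≤ N := by exact_mod_cast hN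
  have ha : 0 < (N : ℝ) * (N - 2) := by nlinarith
  have hD : 0 < (N : ℝ) * (N - 2) * ε ^ 2 + ‖x‖ ^ 2 := by positivity
  have hbase : (N : ℝ) * (N - 2) * ε / ((N : ℝ) * (N - 2) * ε ^ 2 + ‖x‖ ^ 2) * ‖x‖ ^ 2 ≤
      (N : ℝ) * (N - 2) * ε := by
    rw [div_mul_eq_mul_div, div_le_iff₀ hD]
    have : 0 ≤ (N : ℝ) * (N - 2) * ε * ((N : ℝ) * (N - 2) * ε ^ 2) := by positivity
    linarith
  calc ‖talentiRescaled₀ N ε x ^ (2 * ((N : ℝ) - 1) / ((N : ℝ) - 2))‖ * ‖x‖ ^ (2 * (N - 1))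
      = ((N : ℝ) * (N - 2) * ε / ((N : ℝ) * (N - 2) * ε ^ 2 + ‖x‖ ^ 2) * ‖x‖ ^ 2) ^ (N - 1) := by
        rw [talentiRescaled₀_rpow_eq hN hε, norm_pow, Real.norm_of_nonneg (by positivity), pow_mul,
          mul_pow]
    _ ≤ ((N : ℝ) * (N - 2) * ε) ^ (N - 1) := pow_le_pow_left₀ (by positivity) hbase _
    _ = ((N : ℝ) * (N - 2) / ε) ^ (N - 1) * ε ^ (2 * (N - 1)) := by
        rw [pow_mul, ← mul_pow]
        field_simp

end Talenti

lemma sum_mul_sq_apply_le_sum_abs_mul_norm_sq {ι : Type*} [Fintype ι] {n : ℕ} (lam : ι → ℝ)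
    (e : ι → Fin n) (x : EuclideanSpace ℝ (Fin n)) :
    ∑ i, lam i * x (e i) ^ 2 ≤ (∑ i, |lam i|) * ‖x‖ ^ 2 := by
  rw [Finset.sum_mul]
  refine Finset.sum_le_sum fun i _ => ?_
  have hcoord : x (e i) ^ 2 ≤ ‖x‖ ^ 2 := by
    simpa only [Real.norm_eq_abs, sq_abs] using
      pow_le_pow_left₀ (norm_nonneg _) (PiLp.norm_apply_le x (e i)) 2
  exact (mul_le_mul_of_nonneg_right (le_abs_self _) (sq_nonneg _)).trans
    (mul_le_mul_of_nonneg_left hcoord (abs_nonneg _))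

/-- Appendix B of the paper: the boundary-cap contribution satisfies
`∫_Σ U_{ε,0}^(2(N−1)/(N−2)) ≤ C·ε²` where
`Σ = {(x′,x_N) : |x_i| < σ (i ≤ N−1), 0 < x_N < Σ λ_i x_i²}`. -/
theorem stmt_17 (N : ℕ) (hN : 5 ≤ N) (σ : ℝ)
    (lam : Fin (N - 1) → ℝ) :
    let Scap : Set (EuclideanSpace ℝ (Fin N)) :=
      {x | (∀ i : Fin (N - 1), |x (Fin.castLE (Nat.sub_le N 1) i)| < σ) ∧
           0 < x ⟨N - 1, by omega⟩ ∧
           x ⟨N - 1, by omega⟩ < ∑ i : Fin (N - 1), lam i * x (Fin.castLE (Nat.sub_le N 1) i) ^ 2}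
    ∃ C > (0 : ℝ), ∀ ε ∈ Set.Ioc (0 : ℝ) 1,
      ∫ x in Scap, talentiRescaled₀ N ε x ^ (2 * ((N : ℝ) - 1) / ((N : ℝ) - 2)) ≤ C * ε ^ 2 := by
  intro Scap
  set Λ := ∑ i, |lam i|
  have hΛ : 0 ≤ Λ := Finset.sum_nonneg fun i _ => abs_nonneg _
  have hgrowth : ∀ R, 0 < R →
      volume (Scap ∩ closedBall 0 R) ≤ ENNReal.ofReal (2 ^ (N - 1) * Λ * R ^ (N + 1)) := by
    refine fun R hR => (measure_mono (Set.inter_subset_inter_left _ ?_)).trans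
      (volume_setOf_le_mul_norm_sq_inter_closedBall_le ⟨N - 1, by omega⟩ hΛ hR.le)
    exact fun x ⟨_, hpos, hlt⟩ =>
      ⟨hpos.le, hlt.le.trans (sum_mul_sq_apply_le_sum_abs_mul_norm_sq lam _ x)⟩
  set K := (2 ^ (N + 1 + 1) + 1) * ((N : ℝ) * (N - 2)) ^ (N - 1) * (2 ^ (N - 1) * Λ)
  refine ⟨max K 1, lt_max_of_lt_right one_pos, fun ε ⟨hε, _⟩ => ?_⟩
  calc ∫ x in Scap, talentiRescaled₀ N ε x ^ (2 * ((N : ℝ) - 1) / ((N : ℝ) - 2))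
      ≤ ‖∫ x in Scap, talentiRescaled₀ N ε x ^ (2 * ((N : ℝ) - 1) / ((N : ℝ) - 2))‖ :=
        Real.le_norm_self _
    _ ≤ (2 ^ (N + 1 + 1) + 1) * ((N : ℝ) * (N - 2) / ε) ^ (N - 1) * (2 ^ (N - 1) * Λ) *
          ε ^ (N + 1) :=
        norm_setIntegral_le_of_growth_of_decay (by omega) hε (by positivity) hgrowth
          (norm_talentiRescaled₀_rpow_le (by omega) hε)
          (norm_talentiRescaled₀_rpow_mul_norm_pow_le (by omega) hε)
    _ = K * ε ^ 2 := by
        rw [show ε ^ (N + 1) = ε ^ (N - 1) * ε ^ 2 by rw [← pow_add]; congr 1; omega, div_pow]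
        field_simp
        ring
    _ ≤ max K 1 * ε ^ 2 := by gcongr; exact le_max_left K 1
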